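/- arXiv:2510.26256 — 10 statements merged into one kernel-verified Lean document; each statement's English description precedes it below -/
import Mathlib

section
/- Let 0 < θ_1 < θ_2 < ... < θ_L be FV types, a > 0, and let a contract (f_l, w_l)_{l=1}^L satisfy: f_l ≥ 0 for all l, the contract items are pairwise distinct (i.e., (f_i, w_i) ≠ (f_j, w_j) whenever i ≠ j), and the IC constraints hold for all pairs. Then for all i, j ∈ {1,...,L}: w_i > w_j if and only if θ_i > θ_j, and w_i = w_j if and only if θ_i = θ_j. -/
/-- Under pairwise IC with pairwise-distinct contract items,
rewards are ordered exactly as the types are. -/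
theorem reward_iff_type (L : ℕ) (θ f w : Fin L → ℝ) (a : ℝ)
    (hθpos : ∀ l, 0 < θ l) (hθ : StrictMono θ) (ha : 0 < a)
    (hf : ∀ l, 0 ≤ f l)
    (hdist : ∀ i j : Fin L, i ≠ j → (f i, w i) ≠ (f j, w j))
    (hIC : ∀ i j : Fin L, θ i * w i - a * (f i) ^ 2 ≥ θ i * w j - a * (f j) ^ 2) :
    ∀ i j : Fin L, (w i > w j ↔ θ i > θ j) ∧ (w i = w j ↔ θ i = θ j) := by
  intro i j
  have h1 := hIC i j
  have h2 := hIC j i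
  have key : (θ i - θ j) * (w i - w j) ≥ 0 := by nlinarith
  have heq : w i = w j → θ i = θ j := by
    intro hw
    by_contra hne
    have hij : i ≠ j := fun h => hne (by rw [h])
    have hff : f i = f j := by
      have hsq : f i ^ 2 = f j ^ 2 := by nlinarith [hθpos i, hθpos j]
      nlinarith [hf i, hf j, sq_nonneg (f i - f j)]
    exact hdist i j hij (by rw [hff, hw])
  refine ⟨⟨fun hw => ?_, fun hθij => ?_⟩, heq, fun hθij => ?_⟩
  · rcases lt_trichotomy (θ i) (θ j) with h | h | h
    · nlinarith
    · exact absurd (hθ.injective h ▸ rfl : w i = w j) (ne_of_gt hw)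
    · exact h
  · rcases lt_trichotomy (w i) (w j) with h | h | h
    · nlinarith
    · exact absurd (heq h) (ne_of_gt hθij)
    · exact h
  · rw [hθ.injective hθij]
end

section
/- Let 0 < θ_1 < θ_2 < ... < θ_L be FV types, a > 0, and let a contract (f_l, w_l)_{l=1}^L satisfy: f_l ≥ 0 for all l with f_1 > 0, the contract items are pairwise distinct, the IR constraints hold for all l, and the IC constraints hold for all pairs. Then the rewards are strictly increasing and positive: 0 < w_1 < w_2 < ... < w_L. -/
/-- Monotonicity of rewards: under IR and pairwise IC with
pairwise-distinct items and `f 1 > 0`, the rewards satisfy `0 < w_1 < ⋯ < w_L`. -/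
theorem reward_monotone (L : ℕ) (hL : 0 < L) (θ f w : Fin L → ℝ) (a : ℝ)
    (hθpos : ∀ l, 0 < θ l) (hθ : StrictMono θ) (ha : 0 < a)
    (hf : ∀ l, 0 ≤ f l) (hf1 : 0 < f ⟨0, hL⟩)
    (hdist : ∀ i j : Fin L, i ≠ j → (f i, w i) ≠ (f j, w j))
    (hIR : ∀ l, θ l * w l - a * (f l) ^ 2 ≥ 0)
    (hIC : ∀ i j : Fin L, θ i * w i - a * (f i) ^ 2 ≥ θ i * w j - a * (f j) ^ 2) :
    0 < w ⟨0, hL⟩ ∧ StrictMono w := by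
  constructor
  · have h0 := hIR ⟨0, hL⟩
    have hθ0 := hθpos ⟨0, hL⟩
    nlinarith [mul_pos ha (pow_pos hf1 2)]
  · intro i j hij
    have h1 := hIC i j
    have h2 := hIC j i
    have hθij := hθ hij
    have hle : w i ≤ w j := by
      by_contra h
      push_neg at h
      nlinarith [mul_pos (sub_pos.2 hθij) (sub_pos.2 h)]
    rcases lt_or_eq_of_le hle with h | h
    · exact h
    · exfalso
      rw [h] at h1 h2
      have hfle : f i ≤ f j := by
        by_contra h'
        push_neg at h'
        have hs : 0 < f i + f j := by linarith [hf j]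
        nlinarith [mul_pos ha (mul_pos (sub_pos.2 h') hs)]
      have hfge : f j ≤ f i := by
        by_contra h'
        push_neg at h'
        have hs : 0 < f i + f j := by linarith [hf i]
        nlinarith [mul_pos ha (mul_pos (sub_pos.2 h') hs)]
      exact hdist i j (ne_of_lt hij) (by rw [le_antisymm hfle hfge, h])
end

section
/- Let θ_i > 0 and θ_j > 0 be FV types, a > 0, f_i ≥ 0, f_j ≥ 0, and suppose the IC constraints hold between indices i and j in both directions, i.e., θ_i·w_i − a·f_i² ≥ θ_i·w_j − a·f_j² and θ_j·w_j − a·f_j² ≥ θ_j·w_i − a·f_i². Then w_i > w_j if and only if f_i > f_j, and w_i = w_j if and only if f_i = f_j. -/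
/-- Under two-sided IC between `i` and `j`, rewards and resource
allocations are ordered identically. -/
theorem reward_iff_resource (θi θj a fi fj wi wj : ℝ)
    (hθi : 0 < θi) (hθj : 0 < θj) (ha : 0 < a)
    (hfi : 0 ≤ fi) (hfj : 0 ≤ fj)
    (hICij : θi * wi - a * fi ^ 2 ≥ θi * wj - a * fj ^ 2)
    (hICji : θj * wj - a * fj ^ 2 ≥ θj * wi - a * fi ^ 2) :
    (wi > wj ↔ fi > fj) ∧ (wi = wj ↔ fi = fj) := by
  constructor
  · constructor
    · intro h
      have h2 : fj ^ 2 < fi ^ 2 := by nlinarith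
      nlinarith
    · intro h
      have h2 : fj ^ 2 < fi ^ 2 := by nlinarith
      nlinarith
  · constructor
    · intro h
      have h2 : fi ^ 2 = fj ^ 2 := by nlinarith
      nlinarith
    · intro h
      subst h
      have h1 : wi ≥ wj := by nlinarith
      have h2 : wj ≥ wi := by nlinarith
      linarith
end

section
/- Let 0 < θ_1 ≤ θ_2 ≤ ... ≤ θ_L be FV types and a ≥ 0. Suppose a contract (f_l, w_l)_{l=1}^L satisfies the IC constraint of each type l against the contract item of type 1 (i.e., θ_l·w_l − a·f_l² ≥ θ_l·w_1 − a·f_1² for all l), and the IR constraint of the lowest type holds: θ_1·w_1 − a·f_1² ≥ 0. Then the IR constraints of all types hold: θ_l·w_l − a·f_l² ≥ 0 for every l ∈ {1,...,L}. -/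
/-- If each type's IC against the lowest type's item holds and the
lowest type's IR holds, then every type's IR holds. -/
theorem ir_reduction (L : ℕ) (hL : 0 < L) (θ f w : Fin L → ℝ) (a : ℝ)
    (hθ1 : 0 < θ ⟨0, hL⟩) (hθ : Monotone θ) (ha : 0 ≤ a)
    (hIC1 : ∀ l : Fin L,
      θ l * w l - a * (f l) ^ 2 ≥ θ l * w ⟨0, hL⟩ - a * (f ⟨0, hL⟩) ^ 2)
    (hIR1 : θ ⟨0, hL⟩ * w ⟨0, hL⟩ - a * (f ⟨0, hL⟩) ^ 2 ≥ 0) :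
    ∀ l : Fin L, θ l * w l - a * (f l) ^ 2 ≥ 0 := by
  intro l
  have hle : θ ⟨0, hL⟩ ≤ θ l := hθ (by simp [Fin.le_def])
  have hw1 : 0 ≤ w ⟨0, hL⟩ := by
    nlinarith [sq_nonneg (f ⟨0, hL⟩), mul_nonneg ha (sq_nonneg (f ⟨0, hL⟩))]
  have : θ ⟨0, hL⟩ * w ⟨0, hL⟩ ≤ θ l * w ⟨0, hL⟩ :=
    mul_le_mul_of_nonneg_right hle hw1
  have h := hIC1 l
  linarith
end

section
/- Let 0 < θ_1 < θ_2 < ... < θ_L be FV types, a > 0, and let (f_l, w_l)_{l=1}^L be a contract. Suppose all local downward incentive constraints hold, i.e., θ_i·w_i − a·f_i² ≥ θ_i·w_{i−1} − a·f_{i−1}² for every i ∈ {2,...,L}, and all local upward incentive constraints hold, i.e., θ_i·w_i − a·f_i² ≥ θ_i·w_{i+1} − a·f_{i+1}² for every i ∈ {1,...,L−1}. Then the full family of IC constraints holds: θ_i·w_i − a·f_i² ≥ θ_i·w_j − a·f_j² for all i, j ∈ {1,...,L}. -/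
/-- If all local downward (LDIC) and local upward (LUIC) incentive
constraints hold, then the full family of IC constraints holds. -/
theorem ldic_luic_imply_ic (L : ℕ) (θ f w : Fin L → ℝ) (a : ℝ)
    (hθpos : ∀ l, 0 < θ l) (hθ : StrictMono θ) (ha : 0 < a)
    (hLDIC : ∀ i : Fin L, ∀ hi : (i : ℕ) + 1 < L,
      θ ⟨(i : ℕ) + 1, hi⟩ * w ⟨(i : ℕ) + 1, hi⟩ - a * (f ⟨(i : ℕ) + 1, hi⟩) ^ 2 ≥
      θ ⟨(i : ℕ) + 1, hi⟩ * w i - a * (f i) ^ 2)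
    (hLUIC : ∀ i : Fin L, ∀ hi : (i : ℕ) + 1 < L,
      θ i * w i - a * (f i) ^ 2 ≥
      θ i * w ⟨(i : ℕ) + 1, hi⟩ - a * (f ⟨(i : ℕ) + 1, hi⟩) ^ 2) :
    ∀ i j : Fin L, θ i * w i - a * (f i) ^ 2 ≥ θ i * w j - a * (f j) ^ 2 := by
  -- adjacent monotonicity of w
  have wadj : ∀ i : Fin L, ∀ hi : (i : ℕ) + 1 < L, w i ≤ w ⟨(i : ℕ) + 1, hi⟩ := by
    intro i hi
    have h1 := hLDIC i hi
    have h2 := hLUIC i hi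
    have hθlt : θ i < θ ⟨(i : ℕ) + 1, hi⟩ := hθ (by simp [Fin.lt_def])
    nlinarith
  -- w monotone over gaps
  have wmono : ∀ d : ℕ, ∀ i j : Fin L, (i : ℕ) + d = (j : ℕ) → w i ≤ w j := by
    intro d
    induction d with
    | zero =>
      intro i j h
      have : i = j := Fin.ext (by omega)
      simp [this]
    | succ d ih =>
      intro i j h
      have hk : (i : ℕ) + d < L := by omega
      have hk1 : ((⟨(i : ℕ) + d, hk⟩ : Fin L) : ℕ) + 1 < L := by have := j.isLt; simp; omega
      calc w i ≤ w ⟨(i : ℕ) + d, hk⟩ := ih i _ rfl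
        _ ≤ w ⟨((⟨(i : ℕ) + d, hk⟩ : Fin L) : ℕ) + 1, hk1⟩ := wadj _ hk1
        _ = w j := by congr 1; exact Fin.ext (by simp; omega)
  -- downward IC
  have down : ∀ d : ℕ, ∀ i j : Fin L, (j : ℕ) + d = (i : ℕ) →
      θ i * w i - a * (f i) ^ 2 ≥ θ i * w j - a * (f j) ^ 2 := by
    intro d
    induction d with
    | zero =>
      intro i j h
      have : i = j := Fin.ext (by omega)
      simp [this]
    | succ d ih =>
      intro i j h
      set k : Fin L := ⟨(j : ℕ) + d, by omega⟩ with hkdef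
      have hk1 : (k : ℕ) + 1 < L := by have := i.isLt; simp [hkdef]; omega
      have hieq : i = ⟨(k : ℕ) + 1, hk1⟩ := Fin.ext (by simp [hkdef]; omega)
      have hIH : θ k * w k - a * (f k) ^ 2 ≥ θ k * w j - a * (f j) ^ 2 := ih k j rfl
      have hL := hLDIC k hk1
      rw [← hieq] at hL
      have hwjk : w j ≤ w k := wmono d j k rfl
      have hθki : θ k ≤ θ i := le_of_lt (hθ (by rw [Fin.lt_def, hieq]; simp))
      have hθkpos := hθpos k
      nlinarith
  -- upward IC
  have up : ∀ d : ℕ, ∀ i j : Fin L, (i : ℕ) + d = (j : ℕ) →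
      θ i * w i - a * (f i) ^ 2 ≥ θ i * w j - a * (f j) ^ 2 := by
    intro d
    induction d with
    | zero =>
      intro i j h
      have : i = j := Fin.ext (by omega)
      simp [this]
    | succ d ih =>
      intro i j h
      have hi1 : (i : ℕ) + 1 < L := by omega
      set k : Fin L := ⟨(i : ℕ) + 1, hi1⟩ with hkdef
      have hIH : θ k * w k - a * (f k) ^ 2 ≥ θ k * w j - a * (f j) ^ 2 := ih k j (by simp [hkdef]; omega)
      have hU := hLUIC i hi1
      have hwkj : w k ≤ w j := wmono d k j (by simp [hkdef]; omega)
      have hθik : θ i ≤ θ k := le_of_lt (hθ (by rw [Fin.lt_def, hkdef]; simp))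
      have hθkpos := hθpos k
      nlinarith
  intro i j
  rcases le_total (j : ℕ) (i : ℕ) with h | h
  · exact down ((i : ℕ) - (j : ℕ)) i j (by omega)
  · exact up ((j : ℕ) - (i : ℕ)) i j (by omega)
end

section
/- Let 0 < θ_1 < θ_2 < ... < θ_L be FV types, a > 0, c > 0, M_l > 0 and f_l^max > 0 for each l. Suppose (f*, w*) maximizes the MBS utility U(f, w) = Σ_{l=1}^L c·M_l·f_l − Σ_{l=1}^L M_l·θ_l·w_l over all contracts (f, w) ∈ ℝ^L × ℝ^L satisfying 0 ≤ f_l ≤ f_l^max for all l, the IR constraints for all l, and the IC constraints for all pairs. Then at the optimum the IR constraint of the lowest type is tight, θ_1·w*_1 − a·(f*_1)² = 0, and every local downward incentive constraint is tight: θ_l·w*_l − a·(f*_l)² = θ_l·w*_{l−1} − a·(f*_{l−1})² for every l ∈ {2,...,L}. -/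
set_option maxHeartbeats 1600000


/-- At any maximizer of the MBS utility over feasible contracts
(box, IR, and IC constraints), the lowest type's IR constraint and all local
downward incentive constraints are tight. -/
theorem optimal_contract_tight (L : ℕ) (hL : 0 < L) (θ M fmax : Fin L → ℝ)
    (a c : ℝ)
    (hθpos : ∀ l, 0 < θ l) (hθ : StrictMono θ) (ha : 0 < a) (hc : 0 < c)
    (hM : ∀ l, 0 < M l) (hfmax : ∀ l, 0 < fmax l)
    (fstar wstar : Fin L → ℝ)
    (hfeas : (∀ l, 0 ≤ fstar l ∧ fstar l ≤ fmax l) ∧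
      (∀ l, θ l * wstar l - a * (fstar l) ^ 2 ≥ 0) ∧
      (∀ i j : Fin L,
        θ i * wstar i - a * (fstar i) ^ 2 ≥ θ i * wstar j - a * (fstar j) ^ 2))
    (hopt : ∀ f w : Fin L → ℝ,
      ((∀ l, 0 ≤ f l ∧ f l ≤ fmax l) ∧
        (∀ l, θ l * w l - a * (f l) ^ 2 ≥ 0) ∧
        (∀ i j : Fin L,
          θ i * w i - a * (f i) ^ 2 ≥ θ i * w j - a * (f j) ^ 2)) →
      (∑ l, c * M l * f l - ∑ l, M l * θ l * w l) ≤
        (∑ l, c * M l * fstar l - ∑ l, M l * θ l * wstar l)) :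
    θ ⟨0, hL⟩ * wstar ⟨0, hL⟩ - a * (fstar ⟨0, hL⟩) ^ 2 = 0 ∧
    (∀ i : Fin L, ∀ hi : (i : ℕ) + 1 < L,
      θ ⟨(i : ℕ) + 1, hi⟩ * wstar ⟨(i : ℕ) + 1, hi⟩ -
          a * (fstar ⟨(i : ℕ) + 1, hi⟩) ^ 2 =
        θ ⟨(i : ℕ) + 1, hi⟩ * wstar i - a * (fstar i) ^ 2) := by
  obtain ⟨hbox, hIR, hIC⟩ := hfeas
  -- rewards are nonnegative
  have hw0 : ∀ l, 0 ≤ wstar l := by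
    intro l
    have h := hIR l
    nlinarith [sq_nonneg (fstar l), hθpos l]
  -- rewards are monotone
  have hwmono : ∀ i j : Fin L, i ≤ j → wstar i ≤ wstar j := by
    intro i j hij
    rcases eq_or_lt_of_le hij with h | h
    · rw [h]
    · have h1 := hIC i j
      have h2 := hIC j i
      have hθij : θ i < θ j := hθ h
      nlinarith
  -- utilities are monotone
  have humono : ∀ i j : Fin L, i ≤ j →
      θ i * wstar i - a * (fstar i) ^ 2 ≤ θ j * wstar j - a * (fstar j) ^ 2 := by
    intro i j hij
    rcases eq_or_lt_of_le hij with h | h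
    · rw [h]
    · have h1 := hIC j i
      have hθij : θ i < θ j := hθ h
      nlinarith [hw0 i]
  have hLpos : 0 < L := hL
  set T : Fin L := ⟨L - 1, by omega⟩ with hT
  have hleT : ∀ l : Fin L, l ≤ T := by
    intro l
    rw [Fin.le_def]
    have := l.isLt
    simp [hT]
    omega
  have hθmax : ∀ l, θ l ≤ θ T := fun l => hθ.monotone (hleT l)
  have hθT : 0 < θ T := hθpos T
  constructor
  · -- Part 1: IR tight at lowest type
    by_contra hne
    have hpos : 0 < θ ⟨0, hL⟩ * wstar ⟨0, hL⟩ - a * (fstar ⟨0, hL⟩) ^ 2 :=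
      lt_of_le_of_ne (hIR _) (Ne.symm hne)
    set u0 := θ ⟨0, hL⟩ * wstar ⟨0, hL⟩ - a * (fstar ⟨0, hL⟩) ^ 2 with hu0
    set δ := u0 / θ T with hδ
    have hδpos : 0 < δ := div_pos hpos hθT
    have hδT : θ T * δ = u0 := by
      rw [hδ]; field_simp
    have hlow : ∀ l : Fin L, (⟨0, hL⟩ : Fin L) ≤ l := by
      intro l; rw [Fin.le_def]; simp
    have feas : (∀ l, 0 ≤ fstar l ∧ fstar l ≤ fmax l) ∧
        (∀ l, θ l * (wstar l - δ) - a * (fstar l) ^ 2 ≥ 0) ∧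
        (∀ p q : Fin L,
          θ p * (wstar p - δ) - a * (fstar p) ^ 2 ≥
            θ p * (wstar q - δ) - a * (fstar q) ^ 2) := by
      refine ⟨hbox, ?_, ?_⟩
      · intro l
        have h1 := humono ⟨0, hL⟩ l (hlow l)
        have h2 : θ l * δ ≤ θ T * δ :=
          mul_le_mul_of_nonneg_right (hθmax l) (le_of_lt hδpos)
        nlinarith
      · intro p q
        have := hIC p q
        nlinarith
    have key := hopt fstar (fun l => wstar l - δ) feas
    have hsum : ∑ l, M l * θ l * (wstar l - δ) < ∑ l, M l * θ l * wstar l := by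
      apply Finset.sum_lt_sum_of_nonempty
      · exact ⟨⟨0, hL⟩, Finset.mem_univ _⟩
      · intro l _
        nlinarith [mul_pos (mul_pos (hM l) (hθpos l)) hδpos]
    linarith
  · -- Part 2: local downward IC tight
    intro i hi
    by_contra hne
    set l1 : Fin L := ⟨(i : ℕ) + 1, hi⟩ with hl1
    have hil1 : i < l1 := by rw [Fin.lt_def]; simp [hl1]
    have hθi1 : θ i < θ l1 := hθ hil1
    have hwi1 : wstar i ≤ wstar l1 := hwmono i l1 (le_of_lt hil1)
    have hpos : 0 < θ l1 * wstar l1 - a * (fstar l1) ^ 2 -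
        (θ l1 * wstar i - a * (fstar i) ^ 2) := by
      have h := hIC l1 i
      rcases lt_or_eq_of_le h with h' | h'
      · linarith
      · exact absurd h'.symm hne
    set ε := θ l1 * wstar l1 - a * (fstar l1) ^ 2 -
        (θ l1 * wstar i - a * (fstar i) ^ 2) with hε
    set δ := ε / θ T with hδ
    have hδpos : 0 < δ := div_pos hpos hθT
    have hδT : θ T * δ = ε := by
      rw [hδ]; field_simp
    -- utility at l1 is at least ε
    have hul1 : ε ≤ θ l1 * wstar l1 - a * (fstar l1) ^ 2 := by
      have h1 := hIR i
      have h2 : θ i * wstar i ≤ θ l1 * wstar i :=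
        mul_le_mul_of_nonneg_right (le_of_lt hθi1) (hw0 i)
      simp only [hε]
      nlinarith
    set w' : Fin L → ℝ :=
      fun j => wstar j - (if (i : ℕ) + 1 ≤ (j : ℕ) then δ else 0) with hw'
    have feas : (∀ l, 0 ≤ fstar l ∧ fstar l ≤ fmax l) ∧
        (∀ l, θ l * w' l - a * (fstar l) ^ 2 ≥ 0) ∧
        (∀ p q : Fin L,
          θ p * w' p - a * (fstar p) ^ 2 ≥ θ p * w' q - a * (fstar q) ^ 2) := by
      refine ⟨hbox, ?_, ?_⟩
      · intro j
        simp only [hw']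
        by_cases hj : (i : ℕ) + 1 ≤ (j : ℕ)
        · simp only [hj, if_true]
          have hl1j : l1 ≤ j := by rw [Fin.le_def]; simpa [hl1] using hj
          have h1 := humono l1 j hl1j
          have h2 : θ j * δ ≤ θ T * δ :=
            mul_le_mul_of_nonneg_right (hθmax j) (le_of_lt hδpos)
          nlinarith
        · simp only [hj, if_false]
          simpa using hIR j
      · intro p q
        simp only [hw']
        by_cases hp : (i : ℕ) + 1 ≤ (p : ℕ) <;>
          by_cases hq : (i : ℕ) + 1 ≤ (q : ℕ)
        · simp only [hp, hq, if_true]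
          have := hIC p q
          nlinarith
        · -- p high, q low : the hard case
          simp only [hp, hq, if_true, if_false]
          have hl1p : l1 ≤ p := by rw [Fin.le_def]; simpa [hl1] using hp
          have hqi : q ≤ i := by
            rw [Fin.le_def]; omega
          have hθ1p : θ l1 ≤ θ p := hθ.monotone hl1p
          have hθip : θ i ≤ θ p := le_trans (le_of_lt hθi1) hθ1p
          have hwqi : wstar q ≤ wstar i := hwmono q i hqi
          have hA := hIC p l1
          have hB := hIC i q
          have hpδ : θ p * δ ≤ θ T * δ :=
            mul_le_mul_of_nonneg_right (hθmax p) (le_of_lt hδpos)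
          have h1 : 0 ≤ (θ p - θ l1) * (wstar l1 - wstar i) :=
            mul_nonneg (by linarith) (by linarith)
          have h2 : 0 ≤ (θ p - θ i) * (wstar i - wstar q) :=
            mul_nonneg (by linarith) (by linarith)
          simp only [hε] at hδT
          nlinarith
        · simp only [hp, hq, if_false, if_true]
          have h := hIC p q
          have : 0 < θ p * δ := mul_pos (hθpos p) hδpos
          nlinarith
        · simp only [hp, hq, if_false]
          have := hIC p q
          linarith
    have key := hopt fstar w' feas
    have hsum : ∑ l, M l * θ l * w' l < ∑ l, M l * θ l * wstar l := by
      apply Finset.sum_lt_sum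
      · intro l _
        have hle : w' l ≤ wstar l := by
          simp only [hw']
          by_cases hl : (i : ℕ) + 1 ≤ (l : ℕ)
          · rw [if_pos hl]; linarith
          · rw [if_neg hl]; linarith
        have h0 : 0 ≤ M l * θ l := le_of_lt (mul_pos (hM l) (hθpos l))
        exact mul_le_mul_of_nonneg_left hle h0
      · refine ⟨l1, Finset.mem_univ _, ?_⟩
        have hcond : (i : ℕ) + 1 ≤ ((l1 : Fin L) : ℕ) := by simp [hl1]
        have hterm : w' l1 = wstar l1 - δ := by
          simp only [hw']; rw [if_pos hcond]
        rw [hterm]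
        nlinarith [mul_pos (mul_pos (hM l1) (hθpos l1)) hδpos]
    linarith
end

section
/- Let 0 < θ_1 < θ_2 < ... < θ_L be FV types, a > 0, and let (f_l, w_l)_{l=1}^L be a contract with nondecreasing rewards w_1 ≤ w_2 ≤ ... ≤ w_L. Suppose every local downward incentive constraint holds with equality: θ_i·w_i − a·f_i² = θ_i·w_{i−1} − a·f_{i−1}² for all i ∈ {2,...,L}. Then every local upward incentive constraint holds: θ_i·w_i − a·f_i² ≥ θ_i·w_{i+1} − a·f_{i+1}² for all i ∈ {1,...,L−1}. -/
/-- With nondecreasing rewards, if every local downward incentive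
constraint holds with equality, then every local upward incentive constraint holds. -/
theorem ldic_tight_imply_luic (L : ℕ) (θ f w : Fin L → ℝ) (a : ℝ)
    (hθpos : ∀ l, 0 < θ l) (hθ : StrictMono θ) (ha : 0 < a)
    (hw : Monotone w)
    (hLDIC : ∀ i : Fin L, ∀ hi : (i : ℕ) + 1 < L,
      θ ⟨(i : ℕ) + 1, hi⟩ * w ⟨(i : ℕ) + 1, hi⟩ - a * (f ⟨(i : ℕ) + 1, hi⟩) ^ 2 =
      θ ⟨(i : ℕ) + 1, hi⟩ * w i - a * (f i) ^ 2) :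
    ∀ i : Fin L, ∀ hi : (i : ℕ) + 1 < L,
      θ i * w i - a * (f i) ^ 2 ≥
        θ i * w ⟨(i : ℕ) + 1, hi⟩ - a * (f ⟨(i : ℕ) + 1, hi⟩) ^ 2 := by
  intro i hi
  have h := hLDIC i hi
  have hlt : i < (⟨(i : ℕ) + 1, hi⟩ : Fin L) := by
    simp [Fin.lt_def]
  have hw' := hw hlt.le
  have hθ' := hθ hlt
  nlinarith [hθpos i]
end

section
/- Let A and S be finite sets (task vehicles and servers), let q : S → ℕ be server capacities, let each a ∈ A have a strict preference given by a linear order ≻_a on S, and let each s ∈ S have a strict preference given by a linear order ≻_s on A. Then there exists a matching μ : A → Option S with |μ⁻¹(some s)| ≤ q(s) for every s ∈ S that admits no blocking pair, where a pair (a, s) ∈ A × S blocks μ if (i) a is unmatched under μ or strictly prefers s to its assigned server μ(a), and (ii) either |μ⁻¹(some s)| < q(s) or there exists a' with μ(a') = some s and a ≻_s a'. -/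
/-!
Deferred acceptance with the task vehicles proposing. The state records, for every vehicle `a`,
the set `R a` of servers that have not rejected it yet; `a` proposes to its favourite server in
`R a`. As long as some server `s` receives more than `q s` proposals, it rejects its least
preferred proposer. Each step shrinks some `R a`, so the process stops, and it keeps the
invariant that a rejection of `a` by `s` is backed by at least `q s` proposers that `s` prefers
to `a`. When no server is overloaded, assigning every vehicle to its proposal is a matching
within capacities, and the invariant rules out blocking pairs: a vehicle can only envy a server
that rejected it, and that server is full of proposers it prefers.
-/

open Finset

section Best

variable {α : Type*} [Finite α] (r : α → α → Prop) [IsStrictOrder α r]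

/-- `r x y` reads "`x` is preferred to `y`", so the best element of `T` is an `r`-minimal one. -/
noncomputable def best (T : Finset α) : Option α :=
  if h : T.Nonempty then
    some ((Finite.wellFounded_of_trans_of_irrefl r).min T (coe_nonempty.mpr h))
  else none

variable {r} {T : Finset α} {m x : α}

theorem notMem_of_best_eq_none (h : best r T = none) : x ∉ T := fun hx => by
  rw [best, dif_pos ⟨x, hx⟩] at h
  exact Option.some_ne_none _ h

theorem mem_of_best_eq_some (h : best r T = some m) : m ∈ T := by
  unfold best at h
  split_ifs at h
  rw [← Option.some_inj.mp h]
  exact (Finite.wellFounded_of_trans_of_irrefl r).min_mem _ _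

theorem not_rel_best (h : best r T = some m) (hx : x ∈ T) : ¬ r x m := by
  unfold best at h
  split_ifs at h
  rw [← Option.some_inj.mp h]
  exact (Finite.wellFounded_of_trans_of_irrefl r).not_lt_min (↑T) hx

end Best

theorem Finset.exists_mem_forall_ne_rel {α : Type*} [Finite α] (r : α → α → Prop)
    [IsStrictTotalOrder α r] {T : Finset α} (hT : T.Nonempty) :
    ∃ w ∈ T, ∀ x ∈ T, x ≠ w → r x w := by
  obtain ⟨w, hw, hmin⟩ :=
    (Finite.wellFounded_of_trans_of_irrefl (Function.swap r)).has_min T hT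
  refine ⟨w, hw, fun x hx hxw => ?_⟩
  rcases trichotomous_of r x w with h | h | h
  exacts [h, absurd h hxw, absurd h (hmin x hx)]

theorem sum_card_update_erase_lt {ι α : Type*} [Fintype ι] [DecidableEq ι] [DecidableEq α]
    (R : ι → Finset α) {i : ι} {x : α} (hx : x ∈ R i) :
    ∑ j, #(Function.update R i ((R i).erase x) j) < ∑ j, #(R j) := by
  refine sum_lt_sum (fun j _ => ?_) ⟨i, mem_univ i, ?_⟩
  · rcases eq_or_ne j i with rfl | hj
    · simpa using card_erase_le
    · simp [hj]
  · simpa using card_erase_lt_of_mem hx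

namespace DeferredAcceptance

variable {A S : Type*} [Fintype A] [Fintype S] [DecidableEq S]
  (prefA : A → S → S → Prop) [∀ a, IsStrictOrder S (prefA a)]

noncomputable def proposal (R : A → Finset S) (a : A) : Option S :=
  best (prefA a) (R a)

noncomputable def proposers (R : A → Finset S) (s : S) : Finset A :=
  univ.filter fun a => proposal prefA R a = some s

variable (prefS : S → A → A → Prop) (q : S → ℕ)

open Classical in
/-- `R a` is the set of servers that have not rejected `a`. -/
def RejectionsJustified (R : A → Finset S) : Prop :=
  ∀ a s, s ∉ R a → q s ≤ #{a' ∈ proposers prefA R s | prefS s a' a}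

variable {prefA prefS q} {R : A → Finset S} {s : S} {w : A}

theorem mem_proposers : w ∈ proposers prefA R s ↔ proposal prefA R w = some s := by
  simp [proposers]

theorem mem_of_mem_proposers (hw : w ∈ proposers prefA R s) : s ∈ R w :=
  mem_of_best_eq_some (mem_proposers.mp hw)

theorem erase_proposers_subset_update [DecidableEq A] (T : Finset S) (t : S) :
    (proposers prefA R t).erase w ⊆ proposers prefA (Function.update R w T) t := by
  intro x hx
  obtain ⟨hxw, hx⟩ := mem_erase.mp hx
  rw [mem_proposers, proposal, Function.update_of_ne hxw]
  exact mem_proposers.mp hx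

theorem RejectionsJustified.update_erase [DecidableEq A] [∀ s, IsStrictOrder A (prefS s)]
    (hR : RejectionsJustified prefA prefS q R) (hs : q s < #(proposers prefA R s))
    (hw : w ∈ proposers prefA R s)
    (hworst : ∀ x ∈ proposers prefA R s, x ≠ w → prefS s x w) :
    RejectionsJustified prefA prefS q (Function.update R w ((R w).erase s)) := by
  classical
  set R' := Function.update R w ((R w).erase s)
  have hbelow_worst : ∀ c, (w = c ∨ prefS s w c) →
      q s ≤ #{a' ∈ proposers prefA R' s | prefS s a' c} := by
    intro c hc
    calc q s ≤ #((proposers prefA R s).erase w) := by rw [card_erase_of_mem hw]; omega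
      _ ≤ _ := card_le_card fun x hx => by
        refine mem_filter.mpr ⟨erase_proposers_subset_update _ s hx, ?_⟩
        have hxw := hworst x (mem_of_mem_erase hx) (ne_of_mem_erase hx)
        rcases hc with rfl | hc
        exacts [hxw, _root_.trans hxw hc]
  intro b t hb
  by_cases hbt : t ∈ R b
  · obtain ⟨rfl, rfl⟩ : b = w ∧ t = s := by
      rcases eq_or_ne b w with rfl | hbw
      · exact ⟨rfl, by_contra fun hts => hb (by simpa [R', hts] using hbt)⟩
      · exact absurd (by simpa [R', hbw] using hbt) hb
    exact hbelow_worst b (Or.inl rfl)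
  by_cases hwF : w ∈ {a' ∈ proposers prefA R t | prefS t a' b}
  · obtain ⟨hwt, hwb⟩ := mem_filter.mp hwF
    obtain rfl : t = s :=
      Option.some_inj.mp ((mem_proposers.mp hwt).symm.trans (mem_proposers.mp hw))
    exact hbelow_worst b (Or.inr hwb)
  · calc q t ≤ #{a' ∈ proposers prefA R t | prefS t a' b} := hR b t hbt
      _ ≤ _ := card_le_card fun x hx => by
        obtain ⟨hxt, hxb⟩ := mem_filter.mp hx
        have hxw : x ≠ w := by rintro rfl; exact hwF hx
        exact mem_filter.mpr
          ⟨erase_proposers_subset_update _ t (mem_erase.mpr ⟨hxw, hxt⟩), hxb⟩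

theorem exists_rejectionsJustified_card_proposers_le [∀ s, IsStrictTotalOrder A (prefS s)]
    (R : A → Finset S) (hR : RejectionsJustified prefA prefS q R) :
    ∃ R', RejectionsJustified prefA prefS q R' ∧ ∀ s, #(proposers prefA R' s) ≤ q s := by
  classical
  induction R using (measure fun R : A → Finset S => ∑ a, #(R a)).wf.induction with
  | h R ih =>
  by_cases hcap : ∀ s, #(proposers prefA R s) ≤ q s
  · exact ⟨R, hR, hcap⟩
  push Not at hcap
  obtain ⟨s, hs⟩ := hcap
  obtain ⟨w, hw, hworst⟩ :=
    exists_mem_forall_ne_rel (prefS s) (card_pos.mp (Nat.zero_lt_of_lt hs))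
  exact ih _ (sum_card_update_erase_lt R (mem_of_mem_proposers hw))
    (hR.update_erase hs hw hworst)

theorem not_exists_blocking_pair [∀ s, IsStrictOrder A (prefS s)]
    (hR : RejectionsJustified prefA prefS q R) (hcap : ∀ s, #(proposers prefA R s) ≤ q s) :
    ¬ ∃ (a : A) (s : S),
      (proposal prefA R a = none ∨ ∃ s', proposal prefA R a = some s' ∧ prefA a s s') ∧
      (#(proposers prefA R s) < q s ∨ ∃ a', proposal prefA R a' = some s ∧ prefS s a a') := by
  classical
  rintro ⟨a, s, henvy, hroom⟩
  have hrejected : s ∉ R a := by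
    rcases henvy with hnone | ⟨s', hs', hpref⟩
    · exact notMem_of_best_eq_none hnone
    · exact fun hs => not_rel_best hs' hs hpref
  have hfull := hR a s hrejected
  rcases hroom with hlt | ⟨a', ha', hpref⟩
  · exact absurd (hfull.trans (card_filter_le _ _)) hlt.not_ge
  · have hlt : #{x ∈ proposers prefA R s | prefS s x a} < #(proposers prefA R s) :=
      card_lt_card <| (ssubset_iff_of_subset (filter_subset _ _)).mpr
        ⟨a', mem_proposers.mpr ha', fun h => asymm hpref (mem_filter.mp h).2⟩
    exact absurd (hfull.trans_lt hlt) (hcap s).not_gt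

end DeferredAcceptance

open DeferredAcceptance in
theorem stable_matching_exists_general (A S : Type*) [Fintype A] [Fintype S]
    [DecidableEq S]
    (q : S → ℕ)
    (prefA : A → S → S → Prop) (prefS : S → A → A → Prop)
    (hprefA : ∀ a, IsStrictTotalOrder S (prefA a))
    (hprefS : ∀ s, IsStrictTotalOrder A (prefS s)) :
    ∃ μ : A → Option S,
      (∀ s, (Finset.univ.filter (fun a => μ a = some s)).card ≤ q s) ∧
      ¬ ∃ (a : A) (s : S),
        (μ a = none ∨ ∃ s', μ a = some s' ∧ prefA a s s') ∧
        ((Finset.univ.filter (fun a' => μ a' = some s)).card < q s ∨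
          ∃ a', μ a' = some s ∧ prefS s a a') := by
  have := hprefA
  have := hprefS
  obtain ⟨R, hR, hcap⟩ :=
    exists_rejectionsJustified_card_proposers_le (prefA := prefA) (prefS := prefS) (q := q)
      (fun _ => univ) (fun _ s hs => absurd (mem_univ s) hs)
  exact ⟨proposal prefA R, hcap, not_exists_blocking_pair hR hcap⟩

/-- Existence of a stable many-to-one matching of task vehicles
to capacitated servers under strict preferences on both sides: there is a
capacity-respecting matching admitting no blocking pair. -/
theorem stable_matching_exists (A S : Type*) [Fintype A] [Fintype S]
    [DecidableEq A] [DecidableEq S]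
    (q : S → ℕ)
    (prefA : A → S → S → Prop) (prefS : S → A → A → Prop)
    (hprefA : ∀ a, IsStrictTotalOrder S (prefA a))
    (hprefS : ∀ s, IsStrictTotalOrder A (prefS s)) :
    ∃ μ : A → Option S,
      (∀ s, (Finset.univ.filter (fun a => μ a = some s)).card ≤ q s) ∧
      ¬ ∃ (a : A) (s : S),
        (μ a = none ∨ ∃ s', μ a = some s' ∧ prefA a s s') ∧
        ((Finset.univ.filter (fun a' => μ a' = some s)).card < q s ∨
          ∃ a', μ a' = some s ∧ prefS s a a') :=
  stable_matching_exists_general A S q prefA prefS hprefA hprefS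
end

section
/- Let θ_i > θ_j > 0, a > 0, f_i ≥ 0, f_j ≥ 0, and suppose the IC constraints hold between indices i and j in both directions: θ_i·w_i − a·f_i² ≥ θ_i·w_j − a·f_j² and θ_j·w_j − a·f_j² ≥ θ_j·w_i − a·f_i². Then w_i ≥ w_j and f_i ≥ f_j; that is, under pairwise incentive compatibility a strictly higher FV type receives a weakly larger reward and a weakly larger resource allocation. -/
/-- Under two-sided IC, a strictly higher type receives a weakly
larger reward and a weakly larger resource allocation. -/
theorem higher_type_weakly_more (θi θj a fi fj wi wj : ℝ)
    (hθ : θi > θj) (hθj : 0 < θj) (ha : 0 < a)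
    (hfi : 0 ≤ fi) (hfj : 0 ≤ fj)
    (hICij : θi * wi - a * fi ^ 2 ≥ θi * wj - a * fj ^ 2)
    (hICji : θj * wj - a * fj ^ 2 ≥ θj * wi - a * fi ^ 2) :
    wi ≥ wj ∧ fi ≥ fj := by
  have h1 : θi * (wi - wj) ≥ a * (fi ^ 2 - fj ^ 2) := by nlinarith
  have h2 : a * (fi ^ 2 - fj ^ 2) ≥ θj * (wi - wj) := by nlinarith
  have hw : wi ≥ wj := by nlinarith
  have hsq : fi ^ 2 ≥ fj ^ 2 := by nlinarith
  exact ⟨hw, by nlinarith⟩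
end

section
/- Let 0 < θ_1 < θ_2 < ... < θ_L be FV types, a > 0, and let (f_l, w_l)_{l=1}^L be a contract with f_l ≥ 0 for all l that satisfies all constraints of the reduced problem SP2.1: the rewards are nondecreasing and nonnegative (0 ≤ w_1 ≤ w_2 ≤ ... ≤ w_L), the lowest-type IR constraint is tight (θ_1·w_1 = a·f_1²), and every local downward incentive constraint holds with equality (θ_l·w_l − a·f_l² = θ_l·w_{l−1} − a·f_{l−1}² for all l ∈ {2,...,L}). Then the contract is feasible for the original contract-design problem SP2: the IR constraint θ_l·w_l − a·f_l² ≥ 0 holds for every l, and the IC constraint θ_i·w_i − a·f_i² ≥ θ_i·w_j − a·f_j² holds for every pair i, j ∈ {1,...,L}. -/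
/-- Any contract feasible for the reduced problem SP2.1
(nondecreasing nonnegative rewards, tight lowest-type IR, tight LDICs) is
feasible for the original contract-design problem SP2 (all IR and IC hold). -/
theorem reduced_feasible_is_feasible (L : ℕ) (hL : 0 < L) (θ f w : Fin L → ℝ)
    (a : ℝ)
    (hθpos : ∀ l, 0 < θ l) (hθ : StrictMono θ) (ha : 0 < a)
    (hf : ∀ l, 0 ≤ f l)
    (hw0 : 0 ≤ w ⟨0, hL⟩) (hw : Monotone w)
    (hIR1 : θ ⟨0, hL⟩ * w ⟨0, hL⟩ = a * (f ⟨0, hL⟩) ^ 2)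
    (hLDIC : ∀ i : Fin L, ∀ hi : (i : ℕ) + 1 < L,
      θ ⟨(i : ℕ) + 1, hi⟩ * w ⟨(i : ℕ) + 1, hi⟩ - a * (f ⟨(i : ℕ) + 1, hi⟩) ^ 2 =
      θ ⟨(i : ℕ) + 1, hi⟩ * w i - a * (f i) ^ 2) :
    (∀ l, θ l * w l - a * (f l) ^ 2 ≥ 0) ∧
    (∀ i j : Fin L, θ i * w i - a * (f i) ^ 2 ≥ θ i * w j - a * (f j) ^ 2) := by
  -- all rewards are nonnegative
  have hwpos : ∀ l : Fin L, 0 ≤ w l := by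
    intro l
    exact le_trans hw0 (hw (by exact Fin.mk_le_of_le_val (Nat.zero_le _)))
  -- IR by induction on the index
  have hIRnat : ∀ n : ℕ, ∀ hn : n < L, θ ⟨n, hn⟩ * w ⟨n, hn⟩ - a * (f ⟨n, hn⟩) ^ 2 ≥ 0 := by
    intro n
    induction n with
    | zero => intro hn; simp only [ge_iff_le]; linarith [hIR1]
    | succ k ih =>
      intro hn
      have hk : k < L := Nat.lt_of_succ_lt hn
      have hIH := ih hk
      have hld := hLDIC ⟨k, hk⟩ (by simpa using hn)
      have hθle : θ ⟨k, hk⟩ ≤ θ ⟨k + 1, hn⟩ := le_of_lt (hθ (by simp [Fin.mk_lt_mk]))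
      have hwk := hwpos ⟨k, hk⟩
      simp only at hld
      nlinarith [mul_le_mul_of_nonneg_right hθle hwk]
  have hIR : ∀ l, θ l * w l - a * (f l) ^ 2 ≥ 0 := by
    intro l
    have := hIRnat l l.isLt
    simpa using this
  -- key step relation
  refine ⟨hIR, ?_⟩
  -- downward IC
  have down : ∀ d : ℕ, ∀ j : Fin L, ∀ h : (j : ℕ) + d < L,
      θ ⟨(j : ℕ) + d, h⟩ * w ⟨(j : ℕ) + d, h⟩ - a * (f ⟨(j : ℕ) + d, h⟩) ^ 2 ≥
      θ ⟨(j : ℕ) + d, h⟩ * w j - a * (f j) ^ 2 := by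
    intro d
    induction d with
    | zero =>
      intro j h
      have : (⟨(j : ℕ) + 0, h⟩ : Fin L) = j := by ext; simp
      rw [this]
    | succ k ih =>
      intro j h
      have hk : (j : ℕ) + k < L := Nat.lt_of_succ_lt (by omega)
      have hIH := ih j hk
      have hld := hLDIC ⟨(j : ℕ) + k, hk⟩ (by simpa using (by omega : (j : ℕ) + k + 1 < L))
      simp only at hld
      have hθle : θ ⟨(j : ℕ) + k, hk⟩ ≤ θ ⟨(j : ℕ) + k + 1, by omega⟩ :=
        le_of_lt (hθ (by simp [Fin.mk_lt_mk]))
      have hwle : w j ≤ w ⟨(j : ℕ) + k, hk⟩ := hw (by simp [Fin.le_def])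
      have heq : (⟨(j : ℕ) + (k + 1), h⟩ : Fin L) = ⟨(j : ℕ) + k + 1, by omega⟩ := by
        ext; simp; omega
      rw [heq]
      nlinarith [mul_le_mul_of_nonneg_right hθle (sub_nonneg.mpr hwle)]
  -- upward IC
  have up : ∀ d : ℕ, ∀ i : Fin L, ∀ h : (i : ℕ) + d < L,
      θ i * w i - a * (f i) ^ 2 ≥
      θ i * w ⟨(i : ℕ) + d, h⟩ - a * (f ⟨(i : ℕ) + d, h⟩) ^ 2 := by
    intro d
    induction d with
    | zero =>
      intro i h
      have : (⟨(i : ℕ) + 0, h⟩ : Fin L) = i := by ext; simp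
      rw [this]
    | succ k ih =>
      intro i h
      have hk : (i : ℕ) + k < L := Nat.lt_of_succ_lt (by omega)
      have hIH := ih i hk
      have hld := hLDIC ⟨(i : ℕ) + k, hk⟩ (by simpa using (by omega : (i : ℕ) + k + 1 < L))
      simp only at hld
      have hθle : θ i ≤ θ ⟨(i : ℕ) + k + 1, by omega⟩ :=
        le_of_lt (hθ (by simp [Fin.lt_def]))
      have hwle : w ⟨(i : ℕ) + k, hk⟩ ≤ w ⟨(i : ℕ) + k + 1, by omega⟩ :=
        hw (by simp [Fin.le_def])
      have heq : (⟨(i : ℕ) + (k + 1), h⟩ : Fin L) = ⟨(i : ℕ) + k + 1, by omega⟩ := by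
        ext; simp; omega
      rw [heq]
      nlinarith [mul_le_mul_of_nonneg_right hθle (sub_nonneg.mpr hwle)]
  intro i j
  rcases le_total (j : ℕ) (i : ℕ) with hji | hij
  · have h : (j : ℕ) + ((i : ℕ) - (j : ℕ)) < L := by omega
    have := down ((i : ℕ) - (j : ℕ)) j h
    have heq : (⟨(j : ℕ) + ((i : ℕ) - (j : ℕ)), h⟩ : Fin L) = i := by ext; simp; omega
    rwa [heq] at this
  · have h : (i : ℕ) + ((j : ℕ) - (i : ℕ)) < L := by omega
    have := up ((j : ℕ) - (i : ℕ)) i h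
    have heq : (⟨(i : ℕ) + ((j : ℕ) - (i : ℕ)), h⟩ : Fin L) = j := by ext; simp; omega
    rwa [heq] at this
end
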